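/- arXiv:1807.04230 — 3 statements merged into one kernel-verified Lean document; each statement's English description precedes it below -/
import Mathlib

section
/- Let n ∈ ℕ, let U ⊂ ℝ^d be open, let f_1,…,f_n : U → ℝ, let z = (z¹,…,zⁿ) : ℝ → ℝ^n be differentiable, let s ∈ ℝ, and let ρ₀ : U × ℝ → ℝ be such that ρ₀(x,·) is continuously differentiable for each x ∈ U. Define v_{s,t}(x) := exp(−Σ_{k=1}^n f_k(x)(z^k(t) − z^k(s))) and ρ(x,ξ,t) := ρ₀(x, ξ · v_{s,t}(x)) · v_{s,t}(x). Then ρ(x,ξ,s) = ρ₀(x,ξ), and for every (x,ξ,t) ∈ U × ℝ × ℝ the time derivative ∂_t ρ(x,ξ,t) exists and satisfies ∂_t ρ(x,ξ,t) = −∂_ξ( ρ(x,ξ,t) · ξ · Σ_{k=1}^n f_k(x)(z^k)'(t) ), that is, ∂_t ρ = −(Σ_k f_k(x)(z^k)'(t)) (ρ(x,ξ,t) + ξ ∂_ξ ρ(x,ξ,t)). -/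
open Real

/-! Along the curve `τ ↦ ξ v(τ)` the chain rule gives `∂_τ [ρ₀(ξ v) v] = (v'/v) (ξ v ρ₀'(ξ v) v + ρ₀(ξ v) v)`,
and `ξ v ρ₀'(ξ v) v` is exactly `ξ ∂_ξ [ρ₀(ξ v) v]`. For `v = exp(−Σ_k f_k(x)(z^k(τ) − z^k(s)))` the
logarithmic derivative `v'/v` is `−Σ_k f_k(x) (z^k)'(τ)`. -/

theorem hasDerivAt_sum_mul_sub {n : ℕ} (c : Fin n → ℝ) {z : Fin n → ℝ → ℝ} {t : ℝ}
    (hz : ∀ k, DifferentiableAt ℝ (z k) t) (s : ℝ) :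
    HasDerivAt (fun τ => ∑ k, c k * (z k τ - z k s)) (∑ k, c k * deriv (z k) t) t :=
  HasDerivAt.fun_sum fun k _ => ((hz k).hasDerivAt.sub_const (z k s)).const_mul (c k)

theorem deriv_comp_mul_const_mul_const {φ : ℝ → ℝ} {c ξ : ℝ} (hφ : DifferentiableAt ℝ φ (ξ * c)) :
    deriv (fun ξ' => φ (ξ' * c) * c) ξ = deriv φ (ξ * c) * c * c :=
  (hφ.hasDerivAt.comp ξ ((hasDerivAt_id ξ).mul_const c) |>.mul_const c).deriv.trans (by simp)

theorem hasDerivAt_comp_mul_scale_mul_scale {φ v : ℝ → ℝ} {a ξ t : ℝ}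
    (hφ : DifferentiableAt ℝ φ (ξ * v t)) (hv : HasDerivAt v (v t * a) t) :
    HasDerivAt (fun τ => φ (ξ * v τ) * v τ)
      (a * (φ (ξ * v t) * v t + ξ * deriv (fun ξ' => φ (ξ' * v t) * v t) ξ)) t := by
  have hcomp : HasDerivAt (fun τ => φ (ξ * v τ) * v τ)
      (deriv φ (ξ * v t) * (ξ * (v t * a)) * v t + φ (ξ * v t) * (v t * a)) t :=
    (hφ.hasDerivAt.comp t (hv.const_mul ξ)).mul hv
  rw [deriv_comp_mul_const_mul_const hφ]
  convert hcomp using 1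
  ring

theorem stmt8_general (d n : ℕ) (U : Set (EuclideanSpace ℝ (Fin d)))
    (f : Fin n → EuclideanSpace ℝ (Fin d) → ℝ)
    (z : Fin n → ℝ → ℝ) (hz : ∀ k, Differentiable ℝ (z k)) (s : ℝ)
    (ρ₀ : EuclideanSpace ℝ (Fin d) → ℝ → ℝ)
    (hρ₀ : ∀ x ∈ U, ContDiff ℝ 1 (ρ₀ x)) :
    ∀ x ∈ U, ∀ ξ t : ℝ,
      -- initial condition: ρ(x, ξ, s) = ρ₀(x, ξ)
      (ρ₀ x (ξ * Real.exp (-∑ k, f k x * (z k s - z k s))) *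
        Real.exp (-∑ k, f k x * (z k s - z k s)) = ρ₀ x ξ) ∧
      -- ∂_t ρ = −(Σ_k f_k(x)(z^k)'(t)) (ρ(x,ξ,t) + ξ ∂_ξ ρ(x,ξ,t))
      HasDerivAt
        (fun τ => ρ₀ x (ξ * Real.exp (-∑ k, f k x * (z k τ - z k s))) *
          Real.exp (-∑ k, f k x * (z k τ - z k s)))
        (-(∑ k, f k x * deriv (z k) t) *
          (ρ₀ x (ξ * Real.exp (-∑ k, f k x * (z k t - z k s))) *
              Real.exp (-∑ k, f k x * (z k t - z k s)) +
            ξ * deriv (fun ξ' => ρ₀ x (ξ' * Real.exp (-∑ k, f k x * (z k t - z k s))) *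
              Real.exp (-∑ k, f k x * (z k t - z k s))) ξ)) t := by
  intro x hx ξ t
  refine ⟨by simp, ?_⟩
  have hρ : Differentiable ℝ (ρ₀ x) := (hρ₀ x hx).differentiable one_ne_zero
  have hv := (hasDerivAt_sum_mul_sub (fun k => f k x) (fun k => hz k t) s).fun_neg.exp
  exact hasDerivAt_comp_mul_scale_mul_scale (hρ _) hv

/-- Transport of a test function along the inverse characteristics, weighted by the
change-of-variables factor `v_{s,t}(x) = exp(−Σ_k f_k(x)(z^k(t) − z^k(s)))`, solves the
conservative transport equation `∂_t ρ = −∂_ξ(ρ ξ Σ_k f_k(x) (z^k)'(t))`, i.e.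
`∂_t ρ = −(Σ_k f_k(x)(z^k)'(t)) (ρ + ξ ∂_ξ ρ)`, with `ρ(x,ξ,s) = ρ₀(x,ξ)`. -/
theorem stmt8 (d n : ℕ) (U : Set (EuclideanSpace ℝ (Fin d))) (hU : IsOpen U)
    (f : Fin n → EuclideanSpace ℝ (Fin d) → ℝ)
    (z : Fin n → ℝ → ℝ) (hz : ∀ k, Differentiable ℝ (z k)) (s : ℝ)
    (ρ₀ : EuclideanSpace ℝ (Fin d) → ℝ → ℝ)
    (hρ₀ : ∀ x ∈ U, ContDiff ℝ 1 (ρ₀ x)) :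
    ∀ x ∈ U, ∀ ξ t : ℝ,
      -- initial condition: ρ(x, ξ, s) = ρ₀(x, ξ)
      (ρ₀ x (ξ * Real.exp (-∑ k, f k x * (z k s - z k s))) *
        Real.exp (-∑ k, f k x * (z k s - z k s)) = ρ₀ x ξ) ∧
      -- ∂_t ρ = −(Σ_k f_k(x)(z^k)'(t)) (ρ(x,ξ,t) + ξ ∂_ξ ρ(x,ξ,t))
      HasDerivAt
        (fun τ => ρ₀ x (ξ * Real.exp (-∑ k, f k x * (z k τ - z k s))) *
          Real.exp (-∑ k, f k x * (z k τ - z k s)))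
        (-(∑ k, f k x * deriv (z k) t) *
          (ρ₀ x (ξ * Real.exp (-∑ k, f k x * (z k t - z k s))) *
              Real.exp (-∑ k, f k x * (z k t - z k s)) +
            ξ * deriv (fun ξ' => ρ₀ x (ξ' * Real.exp (-∑ k, f k x * (z k t - z k s))) *
              Real.exp (-∑ k, f k x * (z k t - z k s))) ξ)) t :=
  stmt8_general d n U f z hz s ρ₀ hρ₀
end

section
/- Let G : ℝ^d → ℝ be bounded by M > 0 and Lipschitz continuous with constant L > 0, and define Π(x,ξ) := ξ e^{G(x)}. Then there exists a constant C > 0 depending only on M and L such that for every ε ∈ (0,1], every y ∈ ℝ^d, every η ∈ ℝ, and all pairs (x,ξ), (x',ξ') ∈ ℝ^d × ℝ satisfying |x − y| ≤ ε, |x' − y| ≤ ε, |Π(x,ξ) − η| ≤ ε, and |Π(x',ξ') − η| ≤ ε, one has |x − x'| ≤ 2ε and |ξ − ξ'| ≤ C (1 + min(|ξ|, |ξ'|)) ε. -/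
open Real

lemma exp_diff_le_aux {u v M : ℝ} (hu : u ≤ M) (hv : v ≤ M) :
    |Real.exp u - Real.exp v| ≤ Real.exp M * |u - v| := by
  rcases le_total u v with h | h
  · rw [abs_sub_comm, abs_of_nonneg (sub_nonneg.2 (Real.exp_le_exp.2 h)),
      abs_sub_comm, abs_of_nonneg (sub_nonneg.2 h)]
    have h1 : 1 + (u - v) ≤ Real.exp (u - v) := by linarith [Real.add_one_le_exp (u - v)]
    have h2 : Real.exp v ≤ Real.exp M := Real.exp_le_exp.2 hv
    have h3 : Real.exp u = Real.exp v * Real.exp (u - v) := by rw [← Real.exp_add]; ring_nf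
    nlinarith [Real.exp_pos v, Real.exp_pos (u - v)]
  · rw [abs_of_nonneg (sub_nonneg.2 (Real.exp_le_exp.2 h)),
      abs_of_nonneg (sub_nonneg.2 h)]
    have h1 : 1 + (v - u) ≤ Real.exp (v - u) := by linarith [Real.add_one_le_exp (v - u)]
    have h2 : Real.exp u ≤ Real.exp M := Real.exp_le_exp.2 hu
    have h3 : Real.exp v = Real.exp u * Real.exp (v - u) := by rw [← Real.exp_add]; ring_nf
    nlinarith [Real.exp_pos u, Real.exp_pos (v - u)]

lemma core_est (d : ℕ) (G : EuclideanSpace ℝ (Fin d) → ℝ) (M : ℝ) (hM : 0 < M)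
    (hGb : ∀ x, |G x| ≤ M) (L : NNReal) (hGL : LipschitzWith L G)
    (ε : ℝ) (hε : 0 < ε) (η : ℝ)
    (x x' : EuclideanSpace ℝ (Fin d)) (ξ ξ' : ℝ)
    (hxx : ‖x - x'‖ ≤ 2 * ε)
    (h1 : |ξ * Real.exp (G x) - η| ≤ ε) (h2 : |ξ' * Real.exp (G x') - η| ≤ ε) :
    |ξ - ξ'| ≤ 2 * Real.exp M * ε + 2 * L * Real.exp (2 * M) * |ξ'| * ε := by
  set a := ξ * Real.exp (G x) with ha
  set b := ξ' * Real.exp (G x') with hb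
  have hab : |a - b| ≤ 2 * ε := by
    have := abs_sub (a - η) (b - η)
    calc |a - b| = |(a - η) - (b - η)| := by ring_nf
    _ ≤ |a - η| + |b - η| := abs_sub _ _
    _ ≤ 2 * ε := by linarith
  have hξ : ξ = a * Real.exp (-(G x)) := by
    rw [ha, mul_assoc, ← Real.exp_add]; simp
  have hξ' : ξ' = b * Real.exp (-(G x')) := by
    rw [hb, mul_assoc, ← Real.exp_add]; simp
  have key : ξ - ξ' = (a - b) * Real.exp (-(G x)) +
      b * (Real.exp (-(G x)) - Real.exp (-(G x'))) := by
    rw [hξ, hξ']; ring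
  have hGx : -(G x) ≤ M := by have := hGb x; rw [abs_le] at this; linarith [this.1]
  have hGx' : -(G x') ≤ M := by have := hGb x'; rw [abs_le] at this; linarith [this.1]
  have hexp1 : Real.exp (-(G x)) ≤ Real.exp M := Real.exp_le_exp.2 hGx
  have hexp2 : |Real.exp (-(G x)) - Real.exp (-(G x'))| ≤ Real.exp M * |G x - G x'| := by
    have h := exp_diff_le_aux hGx hGx'
    rwa [show -(G x) - -(G x') = -(G x - G x') by ring, abs_neg] at h
  have hGdiff : |G x - G x'| ≤ (L : ℝ) * (2 * ε) := by
    have := hGL.dist_le_mul x x'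
    rw [Real.dist_eq] at this
    have hd : dist x x' = ‖x - x'‖ := by rw [dist_eq_norm]
    calc |G x - G x'| ≤ (L : ℝ) * dist x x' := hGL.dist_le_mul x x'
    _ ≤ (L : ℝ) * (2 * ε) := by
        apply mul_le_mul_of_nonneg_left _ L.coe_nonneg
        rw [hd]; exact hxx
  have hbabs : |b| ≤ |ξ'| * Real.exp M := by
    rw [hb, abs_mul, abs_of_pos (Real.exp_pos _)]
    have : Real.exp (G x') ≤ Real.exp M := Real.exp_le_exp.2 ((abs_le.1 (hGb x')).2.trans le_rfl |>.trans_eq rfl)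
    exact mul_le_mul_of_nonneg_left this (abs_nonneg _)
  have h2M : Real.exp M * Real.exp M = Real.exp (2 * M) := by
    rw [← Real.exp_add]; ring_nf
  calc |ξ - ξ'| = |(a - b) * Real.exp (-(G x)) +
      b * (Real.exp (-(G x)) - Real.exp (-(G x')))| := by rw [key]
  _ ≤ |(a - b) * Real.exp (-(G x))| + |b * (Real.exp (-(G x)) - Real.exp (-(G x')))| :=
      abs_add_le _ _
  _ = |a - b| * Real.exp (-(G x)) + |b| * |Real.exp (-(G x)) - Real.exp (-(G x'))| := by
      rw [abs_mul, abs_mul, abs_of_pos (Real.exp_pos _)]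
  _ ≤ 2 * ε * Real.exp M + (|ξ'| * Real.exp M) * (Real.exp M * ((L : ℝ) * (2 * ε))) := by
      have hA : |a - b| * Real.exp (-(G x)) ≤ 2 * ε * Real.exp M :=
        mul_le_mul hab hexp1 (Real.exp_pos _).le (by linarith)
      have hB : |b| * |Real.exp (-(G x)) - Real.exp (-(G x'))| ≤
          (|ξ'| * Real.exp M) * (Real.exp M * ((L : ℝ) * (2 * ε))) := by
        refine mul_le_mul hbabs (hexp2.trans ?_) (abs_nonneg _) (by positivity)
        exact mul_le_mul_of_nonneg_left hGdiff (Real.exp_pos M).le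
      linarith
  _ = 2 * Real.exp M * ε + 2 * L * (Real.exp M * Real.exp M) * |ξ'| * ε := by ring
  _ = 2 * Real.exp M * ε + 2 * L * Real.exp (2 * M) * |ξ'| * ε := by rw [h2M]

/-- Locality (effective support) estimate for products of convolution kernels composed with
the backward characteristics `Π(x,ξ) = ξ e^{G(x)}`: if `G` is bounded by `M` and Lipschitz
with constant `L`, there is `C > 0` depending only on `M` and `L` such that for every
`ε ∈ (0,1]`, whenever `|x − y| ≤ ε`, `|x' − y| ≤ ε`, `|Π(x,ξ) − η| ≤ ε`, and
`|Π(x',ξ') − η| ≤ ε`, one has `|x − x'| ≤ 2ε` and `|ξ − ξ'| ≤ C(1 + min(|ξ|,|ξ'|))ε`. -/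
theorem stmt12 (d : ℕ) (G : EuclideanSpace ℝ (Fin d) → ℝ) (M : ℝ) (hM : 0 < M)
    (hGb : ∀ x, |G x| ≤ M) (L : NNReal) (hL : 0 < L) (hGL : LipschitzWith L G) :
    ∃ C > (0 : ℝ), ∀ ε : ℝ, 0 < ε → ε ≤ 1 →
      ∀ (y : EuclideanSpace ℝ (Fin d)) (η : ℝ)
        (x x' : EuclideanSpace ℝ (Fin d)) (ξ ξ' : ℝ),
        ‖x - y‖ ≤ ε → ‖x' - y‖ ≤ ε →
        |ξ * Real.exp (G x) - η| ≤ ε → |ξ' * Real.exp (G x') - η| ≤ ε →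
        ‖x - x'‖ ≤ 2 * ε ∧ |ξ - ξ'| ≤ C * (1 + min |ξ| |ξ'|) * ε := by
  refine ⟨2 * (1 + L) * Real.exp (2 * M), by positivity, ?_⟩
  intro ε hε hε1 y η x x' ξ ξ' hxy hx'y h1 h2
  have hxx : ‖x - x'‖ ≤ 2 * ε := by
    calc ‖x - x'‖ = ‖(x - y) - (x' - y)‖ := by abel_nf
    _ ≤ ‖x - y‖ + ‖x' - y‖ := norm_sub_le _ _
    _ ≤ 2 * ε := by linarith
  refine ⟨hxx, ?_⟩
  have hexpM : Real.exp M ≤ Real.exp (2 * M) := Real.exp_le_exp.2 (by linarith)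
  have hexpMpos := Real.exp_pos M
  have final : ∀ m : ℝ, 0 ≤ m → |ξ - ξ'| ≤ 2 * Real.exp M * ε + 2 * L * Real.exp (2 * M) * m * ε →
      |ξ - ξ'| ≤ 2 * (1 + L) * Real.exp (2 * M) * (1 + m) * ε := by
    intro m hm h
    have hL0 : (0 : ℝ) ≤ L := L.coe_nonneg
    have e1 : 2 * Real.exp M * ε ≤ 2 * Real.exp (2 * M) * ε := by nlinarith
    have n1 : (0:ℝ) ≤ 2 * Real.exp (2 * M) * m * ε := by positivity
    have n2 : (0:ℝ) ≤ 2 * (L:ℝ) * Real.exp (2 * M) * ε := by positivity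
    have n3 : (0:ℝ) ≤ 2 * (L:ℝ) * Real.exp (2 * M) * m * ε := by positivity
    nlinarith [Real.exp_pos (2 * M)]
  rcases min_cases |ξ| |ξ'| with ⟨hmin, _⟩ | ⟨hmin, _⟩
  · rw [hmin]
    have hxx' : ‖x' - x‖ ≤ 2 * ε := by rw [norm_sub_rev]; exact hxx
    have h := core_est d G M hM hGb L hGL ε hε η x' x ξ' ξ hxx' h2 h1
    rw [abs_sub_comm ξ' ξ] at h
    exact final |ξ| (abs_nonneg _) h
  · rw [hmin]
    exact final |ξ'| (abs_nonneg _) (core_est d G M hM hGb L hGL ε hε η x x' ξ ξ' hxx h1 h2)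
end

section
/- Let m ∈ (0,2]. Then there exists a constant C > 0 depending only on m such that for all nonzero real numbers ξ, ξ' with |ξ'|/2 ≤ |ξ| ≤ |ξ'|, one has ψ(ξ,ξ') ≤ C |ξ|^{−1} |ξ − ξ'|². -/
open Real

/-- The renormalized commutator weight
`ψ(ξ,ξ') = |ξ|^((2−m)/2) |ξ'|^((2−m)/2) (|ξ|^((m−1)/2) − |ξ'|^((m−1)/2))²`. -/
noncomputable def psiK (m ξ ξ' : ℝ) : ℝ :=
  |ξ| ^ ((2 - m) / 2) * |ξ'| ^ ((2 - m) / 2) *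
    (|ξ| ^ ((m - 1) / 2) - |ξ'| ^ ((m - 1) / 2)) ^ 2

/-- Mean value inequality for `rpow` with exponent `p ≤ 1` on `[a,b]`, `0 < a`. -/
lemma rpow_mvt {p a b : ℝ} (hp : p ≤ 1) (ha : 0 < a) (hab : a ≤ b) :
    |b ^ p - a ^ p| ≤ |p| * a ^ (p - 1) * (b - a) := by
  have hs : Convex ℝ (Set.Icc a b) := convex_Icc a b
  have hderiv : ∀ x ∈ Set.Icc a b,
      HasDerivWithinAt (fun x : ℝ => x ^ p) (p * x ^ (p - 1)) (Set.Icc a b) x := by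
    intro x hx
    exact (Real.hasDerivAt_rpow_const (Or.inl (ha.trans_le hx.1).ne')).hasDerivWithinAt
  have hbound : ∀ x ∈ Set.Icc a b, ‖p * x ^ (p - 1)‖ ≤ |p| * a ^ (p - 1) := by
    intro x hx
    rw [norm_mul, Real.norm_eq_abs, Real.norm_eq_abs,
      abs_of_nonneg (Real.rpow_nonneg (ha.trans_le hx.1).le _)]
    exact mul_le_mul_of_nonneg_left
      (Real.rpow_le_rpow_of_nonpos ha hx.1 (by linarith)) (abs_nonneg p)
  have := hs.norm_image_sub_le_of_norm_hasDerivWithin_le hderiv hbound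
    (Set.left_mem_Icc.2 hab) (Set.right_mem_Icc.2 hab)
  simpa [Real.norm_eq_abs, abs_of_nonneg (sub_nonneg.2 hab)] using this

/-- The crucial commutator estimate for the fast diffusion regime: for `m ∈ (0,2]` there is
`C > 0` depending only on `m` such that for all nonzero `ξ, ξ'` with `|ξ'|/2 ≤ |ξ| ≤ |ξ'|`,
`ψ(ξ,ξ') ≤ C |ξ|⁻¹ |ξ − ξ'|²`. -/
theorem stmt16 (m : ℝ) (hm0 : 0 < m) (hm2 : m ≤ 2) :
    ∃ C > (0 : ℝ), ∀ ξ ξ' : ℝ, ξ ≠ 0 → ξ' ≠ 0 →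
      |ξ'| / 2 ≤ |ξ| → |ξ| ≤ |ξ'| →
      psiK m ξ ξ' ≤ C * |ξ|⁻¹ * |ξ - ξ'| ^ 2 := by
  set p : ℝ := (m - 1) / 2 with hp
  refine ⟨2 * p ^ 2 + 1, by positivity, ?_⟩
  intro ξ ξ' hξ hξ' h1 h2
  set a := |ξ| with haa
  set b := |ξ'| with hbb
  have ha : 0 < a := abs_pos.2 hξ
  have hb : 0 < b := abs_pos.2 hξ'
  have hba : b ≤ 2 * a := by linarith
  -- bound the difference of rpows
  have hmvt : |b ^ p - a ^ p| ≤ |p| * a ^ (p - 1) * (b - a) :=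
    rpow_mvt (by rw [hp]; linarith) ha h2
  have hdist : b - a ≤ |ξ - ξ'| := by
    calc b - a ≤ |b - a| := le_abs_self _
    _ ≤ |ξ' - ξ| := abs_abs_sub_abs_le_abs_sub ξ' ξ
    _ = |ξ - ξ'| := abs_sub_comm ξ' ξ
  have hsq : (a ^ p - b ^ p) ^ 2 ≤ (|p| * a ^ (p - 1)) ^ 2 * |ξ - ξ'| ^ 2 := by
    rw [← mul_pow]
    have h1' : |a ^ p - b ^ p| ≤ |p| * a ^ (p - 1) * |ξ - ξ'| := by
      rw [abs_sub_comm]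
      refine hmvt.trans ?_
      exact mul_le_mul_of_nonneg_left hdist (by positivity)
    calc (a ^ p - b ^ p) ^ 2 = |a ^ p - b ^ p| ^ 2 := (sq_abs _).symm
    _ ≤ (|p| * a ^ (p - 1) * |ξ - ξ'|) ^ 2 :=
        pow_le_pow_left₀ (abs_nonneg _) h1' 2
  -- bound b^{(2-m)/2} by 2 a^{(2-m)/2}
  have hexp : (0:ℝ) ≤ (2 - m) / 2 := by linarith
  have hbpow : b ^ ((2 - m) / 2) ≤ 2 * a ^ ((2 - m) / 2) := by
    calc b ^ ((2 - m) / 2) ≤ (2 * a) ^ ((2 - m) / 2) :=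
          Real.rpow_le_rpow hb.le hba hexp
    _ = 2 ^ ((2 - m) / 2) * a ^ ((2 - m) / 2) :=
          Real.mul_rpow (by norm_num) ha.le
    _ ≤ 2 * a ^ ((2 - m) / 2) := by
          gcongr
          calc (2:ℝ) ^ ((2 - m) / 2) ≤ 2 ^ (1:ℝ) :=
                Real.rpow_le_rpow_of_exponent_le one_le_two (by linarith)
          _ = 2 := Real.rpow_one 2
  -- main computation
  have key : psiK m ξ ξ' ≤
      2 * a ^ ((2 - m) / 2) * a ^ ((2 - m) / 2) *
        ((|p| * a ^ (p - 1)) ^ 2 * |ξ - ξ'| ^ 2) := by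
    rw [psiK]
    calc a ^ ((2 - m) / 2) * b ^ ((2 - m) / 2) * (a ^ p - b ^ p) ^ 2
        ≤ a ^ ((2 - m) / 2) * (2 * a ^ ((2 - m) / 2)) * (a ^ p - b ^ p) ^ 2 := by
          gcongr
      _ ≤ a ^ ((2 - m) / 2) * (2 * a ^ ((2 - m) / 2)) *
          ((|p| * a ^ (p - 1)) ^ 2 * |ξ - ξ'| ^ 2) := by
          gcongr
      _ = 2 * a ^ ((2 - m) / 2) * a ^ ((2 - m) / 2) *
          ((|p| * a ^ (p - 1)) ^ 2 * |ξ - ξ'| ^ 2) := by ring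
  refine key.trans ?_
  have hap : (|p| * a ^ (p - 1)) ^ 2 = p ^ 2 * a ^ (2 * (p - 1)) := by
    rw [mul_pow, sq_abs, ← Real.rpow_natCast (a ^ (p - 1)) 2, ← Real.rpow_mul ha.le]
    ring_nf
  rw [hap]
  have hcollapse : a ^ ((2 - m) / 2) * a ^ ((2 - m) / 2) * a ^ (2 * (p - 1)) = a⁻¹ := by
    rw [← Real.rpow_add ha, ← Real.rpow_add ha, ← Real.rpow_neg_one a]
    congr 1
    rw [hp]; ring
  calc 2 * a ^ ((2 - m) / 2) * a ^ ((2 - m) / 2) * (p ^ 2 * a ^ (2 * (p - 1)) * |ξ - ξ'| ^ 2)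
      = 2 * p ^ 2 * (a ^ ((2 - m) / 2) * a ^ ((2 - m) / 2) * a ^ (2 * (p - 1))) * |ξ - ξ'| ^ 2 := by
        ring
    _ = 2 * p ^ 2 * a⁻¹ * |ξ - ξ'| ^ 2 := by rw [hcollapse]
    _ ≤ (2 * p ^ 2 + 1) * a⁻¹ * |ξ - ξ'| ^ 2 := by
        have h0 : (0:ℝ) ≤ a⁻¹ * |ξ - ξ'| ^ 2 := by positivity
        nlinarith
end
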